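/- The readback translation is a left inverse of the value-naming transformation: for every CPS term M, R(C_vn(M)) ≡ M. -/

import Mathlib

/-!
Statement 4: The readback translation is a left inverse of the value-naming
transformation: for every CPS term `M`, `R(C_vn(M)) ≡ M`.
-/

namespace CostLabelling

abbrev Var := ℕ
abbrev Label := ℕ

inductive Tm : Type where
  | var : Var → Tm
  | lam : List Var → Tm → Tm
  | app : Tm → List Tm → Tm
  | tup : List Tm → Tm
  | proj : ℕ → Tm → Tm
  | letin : Var → Tm → Tm → Tm
  | pre : Label → Tm → Tm
  | post : Tm → Label → Tm

inductive IsValue : Tm → Prop where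
  | var : ∀ x, IsValue (.var x)
  | lam : ∀ xs M, IsValue (.lam xs M)
  | tup : ∀ Vs, (∀ V ∈ Vs, IsValue V) → IsValue (.tup Vs)

mutual
def subst (V : Tm) (x : Var) : Tm → Tm
  | .var y => if y = x then V else .var y
  | .lam xs M => if x ∈ xs then .lam xs M else .lam xs (subst V x M)
  | .app M Ns => .app (subst V x M) (substList V x Ns)
  | .tup Ms => .tup (substList V x Ms)
  | .proj i M => .proj i (subst V x M)
  | .letin y M N => .letin y (subst V x M) (if y = x then N else subst V x N)
  | .pre l M => .pre l (subst V x M)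
  | .post M l => .post (subst V x M) l
def substList (V : Tm) (x : Var) : List Tm → List Tm
  | [] => []
  | M :: Ms => subst V x M :: substList V x Ms
end

mutual
def fv : Tm → List Var
  | .var x => [x]
  | .lam xs M => (fv M).filter (fun y => y ∉ xs)
  | .app M Ns => fv M ++ fvList Ns
  | .tup Ms => fvList Ms
  | .proj _ M => fv M
  | .letin y M N => fv M ++ (fv N).filter (fun z => z ≠ y)
  | .pre _ M => fv M
  | .post M _ => fv M
def fvList : List Tm → List Var
  | [] => []
  | M :: Ms => fv M ++ fvList Ms
end

/-- `V` is not a variable. -/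
def NonVar (V : Tm) : Prop := ∀ x, V ≠ .var x

mutual
/-- Values of the CPS calculus `λℓ_cps`. -/
inductive CpsVal : Tm → Prop where
  | var : ∀ x, CpsVal (.var x)
  | lam : ∀ xs M, CpsTm M → CpsVal (.lam xs M)
  | tup : ∀ Vs, (∀ V ∈ Vs, CpsVal V) → CpsVal (.tup Vs)

/-- Terms of the CPS calculus `λℓ_cps` :
`M ::= @(V,V⁺) | let x = πᵢ(V) in M | ℓ > M`. -/
inductive CpsTm : Tm → Prop where
  | app : ∀ V Ws, CpsVal V → (∀ W ∈ Ws, CpsVal W) → Ws ≠ [] →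
      CpsTm (.app V Ws)
  | letproj : ∀ x i V M, CpsVal V → CpsTm M →
      CpsTm (.letin x (.proj i V) M)
  | pre : ∀ l M, CpsTm M → CpsTm (.pre l M)
end

mutual
/-- `Vn M N` : the transformation in value named form maps the CPS term `M`
to `N` (`C_vn(M) ≡ N`); fresh names are chosen nondeterministically. -/
inductive Vn : Tm → Tm → Prop where
  | app_vars : ∀ (x : Var) (zs : List Var), Vn (.app (.var x) (zs.map .var)) (.app (.var x) (zs.map .var))
  | app_head : ∀ V Ms y N R, NonVar V → y ∉ fv (.app V Ms) →
      Vn (.app (.var y) Ms) N → VnVal V y N R → Vn (.app V Ms) R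
  | app_arg : ∀ (x : Var) (vs : List Var) V Ms y N R, NonVar V →
      y ∉ fv (.app (.var x) (vs.map .var ++ V :: Ms)) →
      Vn (.app (.var x) (vs.map .var ++ .var y :: Ms)) N → VnVal V y N R →
      Vn (.app (.var x) (vs.map .var ++ V :: Ms)) R
  | letp_var : ∀ x i z M N, Vn M N →
      Vn (.letin x (.proj i (.var z)) M) (.letin x (.proj i (.var z)) N)
  | letp_val : ∀ x i V M y N R, NonVar V →
      y ∉ fv (.letin x (.proj i V) M) →
      Vn M N → VnVal V y (.letin x (.proj i (.var y)) N) R →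
      Vn (.letin x (.proj i V) M) R
  | pre : ∀ l M N, Vn M N → Vn (.pre l M) (.pre l N)

/-- `VnVal V y N R` : `R ≡ Φ(V,y)[N]`, where `Φ(V,y)` is the value-naming
context of the paper (a sequence of let-bindings naming all non-variable
values of `V`, the outermost one bound to `y`). -/
inductive VnVal : Tm → Var → Tm → Tm → Prop where
  | lam : ∀ xs M M' y N, Vn M M' →
      VnVal (.lam xs M) y N (.letin y (.lam xs M') N)
  | tup_vars : ∀ (zs : List Var) (y : Var) (N : Tm),
      VnVal (.tup (zs.map .var)) y N (.letin y (.tup (zs.map .var)) N)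
  | tup_step : ∀ (vs : List Var) V Ws z y N R R', NonVar V →
      z ∉ fv (.tup (vs.map .var ++ V :: Ws)) → z ∉ fv N → z ≠ y →
      VnVal (.tup (vs.map .var ++ .var z :: Ws)) y N R →
      VnVal V z R R' →
      VnVal (.tup (vs.map .var ++ V :: Ws)) y N R'
end

mutual
/-- The readback translation `R` from value named CPS terms to CPS terms:
it inlines value definitions, `R(let x = V in M) = [R(V)/x]R(M)`, and is
homomorphic on the other constructs. -/
def rb : Tm → Tm
  | .var x => .var x
  | .lam xs M => .lam xs (rb M)
  | .app M Ns => .app (rb M) (rbList Ns)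
  | .tup Ms => .tup (rbList Ms)
  | .proj i M => .proj i (rb M)
  | .letin x (.proj i N) M => .letin x (.proj i (rb N)) (rb M)
  | .letin x V M => subst (rb V) x (rb M)
  | .pre l M => .pre l (rb M)
  | .post M l => .post (rb M) l
def rbList : List Tm → List Tm
  | [] => []
  | M :: Ms => rb M :: rbList Ms
end

/-!
The readback of a naming context `Φ(V, y)[N]` is `rb N` with its hole `y` replaced by `V`.
Since `subst` is not capture-avoiding, this replacement is not `subst V y (rb N)` in general;
instead `rb N` is written as `F (.var y)` for a function `F` that commutes with substitution of
any variable outside `fv N \ {y}`. Value naming only creates holes outside binders (head and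
arguments of an application, subject of a projection, components of a tuple), and the freshness
side conditions of `C_vn` preserve this invariant.
-/

@[simp] lemma fvList_append (As Bs : List Tm) : fvList (As ++ Bs) = fvList As ++ fvList Bs := by
  induction As with
  | nil => rfl
  | cons M Ms ih => simp [fvList, ih]

@[simp] lemma fvList_map_var (zs : List Var) : fvList (zs.map .var) = zs := by
  induction zs with
  | nil => rfl
  | cons z zs ih => simp [fvList, fv, ih]

@[simp] lemma rbList_map_var (zs : List Var) : rbList (zs.map .var) = zs.map .var := by
  induction zs with
  | nil => rfl
  | cons z zs ih => simp [rbList, rb, ih]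

lemma substList_append (V : Tm) (x : Var) (As Bs : List Tm) :
    substList V x (As ++ Bs) = substList V x As ++ substList V x Bs := by
  induction As with
  | nil => rfl
  | cons M Ms ih => simp [substList, ih]

mutual
theorem subst_eq_self_of_notMem_fv (V : Tm) (x : Var) : ∀ M, x ∉ fv M → subst V x M = M
  | .var y, h => by simp_all [fv, subst, eq_comm]
  | .lam xs M, h => by
    by_cases hx : x ∈ xs
    · simp [subst, hx]
    · simp_all [fv, subst, subst_eq_self_of_notMem_fv V x M]
  | .app M Ns, h => by
    simp_all [fv, subst, subst_eq_self_of_notMem_fv V x M,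
      substList_eq_self_of_notMem_fvList V x Ns]
  | .tup Ms, h => by simp_all [fv, subst, substList_eq_self_of_notMem_fvList V x Ms]
  | .proj _ M, h => by simp_all [fv, subst, subst_eq_self_of_notMem_fv V x M]
  | .letin y M N, h => by
    by_cases hy : y = x
    · simp_all [fv, subst, subst_eq_self_of_notMem_fv V x M]
    · simp only [fv, List.mem_append, List.mem_filter, decide_eq_true_eq, not_or, not_and,
        not_not] at h
      have hN : x ∉ fv N := fun hx => hy (h.2 hx).symm
      simp [subst, hy, subst_eq_self_of_notMem_fv V x M h.1, subst_eq_self_of_notMem_fv V x N hN]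
  | .pre _ M, h => by simp_all [fv, subst, subst_eq_self_of_notMem_fv V x M]
  | .post M _, h => by simp_all [fv, subst, subst_eq_self_of_notMem_fv V x M]
theorem substList_eq_self_of_notMem_fvList (V : Tm) (x : Var) :
    ∀ Ms, x ∉ fvList Ms → substList V x Ms = Ms
  | [], _ => rfl
  | M :: Ms, h => by
    simp_all [fvList, substList, subst_eq_self_of_notMem_fv V x M,
      substList_eq_self_of_notMem_fvList V x Ms]
end

mutual
theorem fv_subset_of_vn {M N : Tm} : Vn M N → fv M ⊆ fv N
  | .app_vars _ _ => List.Subset.refl _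
  | .app_head _ _ _ _ _ _ hy hN hR => by
    have := fv_subset_of_vn hN
    have := fv_letin_subset_of_vnVal hR
    simp_all [List.subset_def, fv]
    grind
  | .app_arg _ _ _ _ _ _ _ _ hy hN hR => by
    have := fv_subset_of_vn hN
    have := fv_letin_subset_of_vnVal hR
    simp_all [List.subset_def, fv, fvList]
    grind
  | .letp_var _ _ _ _ _ hN => by
    have := fv_subset_of_vn hN
    simp_all [List.subset_def, fv]
  | .letp_val _ _ _ _ _ _ _ _ hy hN hR => by
    have := fv_subset_of_vn hN
    have := fv_letin_subset_of_vnVal hR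
    simp_all [List.subset_def, fv]
    grind
  | .pre _ _ _ hN => by simpa [fv] using fv_subset_of_vn hN
theorem fv_letin_subset_of_vnVal {V : Tm} {y : Var} {N R : Tm} :
    VnVal V y N R → fv (.letin y V N) ⊆ fv R
  | .lam _ _ _ _ _ hM => by
    have := fv_subset_of_vn hM
    simp_all [List.subset_def, fv]
    grind
  | .tup_vars _ _ _ => List.Subset.refl _
  | .tup_step _ _ _ _ _ _ _ _ _ hz hzN hzy hR hR' => by
    have := fv_letin_subset_of_vnVal hR
    have := fv_letin_subset_of_vnVal hR'
    simp_all [List.subset_def, fv, fvList]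
    grind
end

def CommutesWithSubst (F : Tm → Tm) (w : Var) : Prop :=
  ∀ W t, subst W w (F t) = F (subst W w t)

lemma substList_map_var_append_cons (W : Tm) {w : Var} {vs : List Var} (t : Tm) {Ws : List Tm}
    (hvs : w ∉ vs) (hWs : w ∉ fvList Ws) :
    substList W w (vs.map .var ++ t :: Ws) = vs.map .var ++ subst W w t :: Ws := by
  rw [substList_append, substList_eq_self_of_notMem_fvList W w _ (by simpa using hvs)]
  simp [substList, substList_eq_self_of_notMem_fvList W w Ws hWs]

lemma commutesWithSubst_app_head {w : Var} {Ms : List Tm} (h : w ∉ fvList Ms) :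
    CommutesWithSubst (fun t => .app t Ms) w := fun W t => by
  simp [subst, substList_eq_self_of_notMem_fvList W w Ms h]

lemma commutesWithSubst_app_arg {w x : Var} {vs : List Var} {Ms : List Tm} (hx : w ≠ x)
    (hvs : w ∉ vs) (hMs : w ∉ fvList Ms) :
    CommutesWithSubst (fun t => .app (.var x) (vs.map .var ++ t :: Ms)) w := fun W t => by
  simp [subst, substList_map_var_append_cons W t hvs hMs, hx.symm]

lemma commutesWithSubst_letin_proj {w x : Var} {i : ℕ} {M : Tm} (h : w ∈ fv M → w = x) :
    CommutesWithSubst (fun t => .letin x (.proj i t) M) w := fun W t => by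
  by_cases hx : x = w
  · simp [subst, hx]
  · simp [subst, hx, subst_eq_self_of_notMem_fv W w M fun hw => hx (h hw).symm]

lemma CommutesWithSubst.comp_tup {F : Tm → Tm} {w : Var} {vs : List Var} {Ws : List Tm}
    (hF : CommutesWithSubst F w) (hvs : w ∉ vs) (hWs : w ∉ fvList Ws) :
    CommutesWithSubst (fun t => F (.tup (vs.map .var ++ t :: Ws))) w := fun W t => by
  simp only [hF W, subst, substList_map_var_append_cons W t hvs hWs]

mutual
theorem rb_eq_of_vn {M N : Tm} : Vn M N → rb N = M
  | .app_vars _ _ => by simp [rb]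
  | .app_head _ _ y _ _ _ hy hN hR => by
    refine rb_eq_of_vnVal hR _ (fun w hw => commutesWithSubst_app_head fun hwMs => ?_)
      (rb_eq_of_vn hN)
    have hwy : w = y := hw (fv_subset_of_vn hN (by simp [fv, hwMs]))
    exact hy (by simp [fv, ← hwy, hwMs])
  | .app_arg _ _ _ _ _ _ _ _ hy hN hR => by
    refine rb_eq_of_vnVal hR _ (fun w hw => commutesWithSubst_app_arg ?_ ?_ ?_)
      (rb_eq_of_vn hN) <;>
    · have := fv_subset_of_vn hN
      simp_all [List.subset_def, fv, fvList]
      grind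
  | .letp_var _ _ _ _ _ hN => by simp [rb, rb_eq_of_vn hN]
  | .letp_val _ _ _ _ y _ _ _ hy hN hR => by
    refine rb_eq_of_vnVal hR _ (fun w hw => commutesWithSubst_letin_proj fun hwM => ?_)
      (by simp [rb, rb_eq_of_vn hN])
    by_contra hwx
    have hwy : w = y := hw (by simp [fv, fv_subset_of_vn hN hwM, hwx])
    subst hwy
    simp [fv, hwM, hwx] at hy
  | .pre _ _ _ hN => by simp [rb, rb_eq_of_vn hN]
theorem rb_eq_of_vnVal {V : Tm} {y : Var} {N R : Tm} : VnVal V y N R →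
    ∀ F : Tm → Tm, (∀ w, (w ∈ fv N → w = y) → CommutesWithSubst F w) →
      rb N = F (.var y) → rb R = F V
  | .lam _ _ _ y _ hM, _, hF, hN => by
    simp [rb, rb_eq_of_vn hM, hN, hF y (fun _ => rfl) _ _, subst]
  | .tup_vars _ y _, _, hF, hN => by
    simp [rb, hN, hF y (fun _ => rfl) _ _, subst]
  | .tup_step _ _ _ _ _ _ _ _ _ hz hzN hzy hR hR', F, hF, hN => by
    refine rb_eq_of_vnVal hR' _ (fun w hw => (hF w ?_).comp_tup ?_ ?_)
      (rb_eq_of_vnVal hR F hF hN) <;>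
    · have := fv_letin_subset_of_vnVal hR
      simp_all [List.subset_def, fv, fvList]
      grind
end

/-- For every CPS term `M`, `R(C_vn(M)) ≡ M`. -/
theorem readback_left_inverse_of_value_naming
    (M N : Tm) (hM : CpsTm M) (hvn : Vn M N) :
    rb N = M :=
  rb_eq_of_vn hvn

end CostLabelling
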